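/- arXiv:1309.4498 — 4 statements merged into one kernel-verified Lean document; each statement's English description precedes it below -/
import Mathlib

section
/- Let 0 < β < 1, σ > 0, t₀ > 0, and set μ = ln t₀ + σ². Then f_RQ(ln t₀) = f_LN(ln t₀) if and only if β = (2/π)·arctan((√(2π)/σ)·exp(−σ²/2)). -/
open Real

/-- The Cole–Cole (RQ) distribution of relaxation times in the variable `s = ln t`. -/
noncomputable def fRQ (β t₀ : ℝ) (s : ℝ) : ℝ :=
  Real.sin (β * π) / (2 * π * (Real.cosh (β * (s - Real.log t₀)) + Real.cos (β * π)))

/-- The log-normal distribution of relaxation times in the variable `s = ln t`. -/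
noncomputable def fLN (σ μ : ℝ) (s : ℝ) : ℝ :=
  Real.exp (-(s - μ) ^ 2 / (2 * σ ^ 2)) / (σ * Real.sqrt (2 * π))

/-- **Peak alignment of the RQ and log-normal distributions.**
For `0 < β < 1`, `σ > 0`, `t₀ > 0` and `μ = ln t₀ + σ²`, the peak values agree,
`f_RQ(ln t₀) = f_LN(ln t₀)`, if and only if
`β = (2/π) arctan((√(2π)/σ) exp(-σ²/2))`. -/
theorem fRQ_eq_fLN_iff (β σ t₀ μ : ℝ) (hβ₀ : 0 < β) (hβ₁ : β < 1) (hσ : 0 < σ)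
    (ht₀ : 0 < t₀) (hμ : μ = Real.log t₀ + σ ^ 2) :
    fRQ β t₀ (Real.log t₀) = fLN σ μ (Real.log t₀) ↔
      β = (2 / π) * Real.arctan ((Real.sqrt (2 * π) / σ) * Real.exp (-σ ^ 2 / 2)) := by
  have hπ := Real.pi_pos
  have hc : 0 < Real.cos (β * π / 2) := by
    apply Real.cos_pos_of_mem_Ioo
    constructor
    · nlinarith
    · nlinarith
  have hs : 0 < Real.sin (β * π / 2) := by
    apply Real.sin_pos_of_pos_of_lt_pi
    · positivity
    · nlinarith
  -- half angle identities
  have hsin : Real.sin (β * π) = 2 * Real.sin (β * π / 2) * Real.cos (β * π / 2) := by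
    have := Real.sin_two_mul (β * π / 2)
    rwa [show 2 * (β * π / 2) = β * π by ring] at this
  have hcos : 1 + Real.cos (β * π) = 2 * Real.cos (β * π / 2) ^ 2 := by
    have := Real.cos_two_mul (β * π / 2)
    rw [show 2 * (β * π / 2) = β * π by ring] at this
    linarith
  set S : ℝ := Real.sqrt (2 * π) with hS
  have hsqrt : 0 < S := Real.sqrt_pos.mpr (by positivity)
  have hsq : S * S = 2 * π := Real.mul_self_sqrt (by positivity)
  have hLHS : fRQ β t₀ (Real.log t₀) = Real.tan (β * π / 2) / (2 * π) := by
    unfold fRQ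
    rw [show β * (Real.log t₀ - Real.log t₀) = 0 by ring, Real.cosh_zero, Real.tan_eq_sin_div_cos,
      hsin, hcos]
    rw [div_eq_div_iff (by positivity) (by positivity), div_mul_eq_mul_div,
      eq_comm, div_eq_iff hc.ne']
    ring
  have hRHS : fLN σ μ (Real.log t₀) = Real.exp (-σ ^ 2 / 2) / (σ * Real.sqrt (2 * π)) := by
    unfold fLN
    rw [hμ]
    congr 2
    field_simp
    ring
  rw [hLHS, hRHS]
  set A : ℝ := (Real.sqrt (2 * π) / σ) * Real.exp (-σ ^ 2 / 2) with hA
  have hAeq : Real.exp (-σ ^ 2 / 2) / (σ * Real.sqrt (2 * π)) = A / (2 * π) := by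
    rw [hA, ← hS, ← hsq]
    field_simp
  rw [hAeq, div_left_inj' (show (2 * π : ℝ) ≠ 0 by positivity)]
  constructor
  · intro h
    have : Real.arctan A = β * π / 2 := by
      rw [← h]
      exact Real.arctan_tan (by nlinarith) (by nlinarith)
    rw [this]; field_simp
  · intro h
    have hb : β * π / 2 = Real.arctan A := by
      rw [h]; field_simp
    rw [hb, Real.tan_arctan]
end

section
/- Let ω > 0, s₁ ≤ s_N, ε > 0, and let f : ℝ → ℝ be measurable with 0 ≤ f(s) ≤ ε for all s ≤ s₁ and all s ≥ s_N, such that s ↦ f(s)·ω e^{s}/(1 + ω² e^{2s}) is integrable on (−∞, s₁] and on [s_N, ∞). Then the truncation error e₂(ω) = |∫_{-∞}^{s₁} f(s)·ωe^{s}/(1+ω²e^{2s}) ds + ∫_{s_N}^{∞} f(s)·ωe^{s}/(1+ω²e^{2s}) ds − f(s₁)·arctan(ω e^{s₁}) − f(s_N)·(π/2 − arctan(ω e^{s_N}))| satisfies e₂(ω) ≤ ε·(π/2 + arctan(ω e^{s₁}) − arctan(ω e^{s_N})) ≤ ε·π. -/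
/-!
The map `s ↦ arctan (ω eˢ)` is a primitive of the kernel `h₂(ω, eˢ)` and increases from `0` to
`π/2`, so the quadrature weights `r₂,₁` and `r₂,N` are exactly the masses of the kernel on the two
tails `(-∞, s₁]` and `[s_N, ∞)`. On a tail of mass `m`, both `∫ f h₂` and `f(endpoint) · m` lie in
`[0, ε m]`, hence differ by at most `ε m`. Adding the two tails gives the first bound, and the total
mass is at most `π` since `arctan` takes values in `(-π/2, π/2)` and `ω e^{s_N} > 0`.
-/

open MeasureTheory Set Filter Topology Real

theorem abs_setIntegral_mul_sub_mul_setIntegral_le {α : Type*} [MeasurableSpace α]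
    {μ : Measure α} {S : Set α} (hS : MeasurableSet S) {f k : α → ℝ} {ε : ℝ} {c : α}
    (hc : c ∈ S) (hf : ∀ x ∈ S, 0 ≤ f x ∧ f x ≤ ε) (hk : ∀ x ∈ S, 0 ≤ k x)
    (hki : IntegrableOn k S μ) :
    |∫ x in S, f x * k x ∂μ - f c * ∫ x in S, k x ∂μ| ≤ ε * ∫ x in S, k x ∂μ := by
  have hmass : 0 ≤ ∫ x in S, k x ∂μ := setIntegral_nonneg hS hk
  have hint_nonneg : 0 ≤ ∫ x in S, f x * k x ∂μ :=
    setIntegral_nonneg hS fun x hx => mul_nonneg (hf x hx).1 (hk x hx)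
  have hint_le : ∫ x in S, f x * k x ∂μ ≤ ε * ∫ x in S, k x ∂μ := by
    rw [← integral_const_mul]
    refine integral_mono_of_nonneg (ae_restrict_of_forall_mem hS fun x hx => ?_)
      (hki.const_mul ε) (ae_restrict_of_forall_mem hS fun x hx => ?_)
    · exact mul_nonneg (hf x hx).1 (hk x hx)
    · exact mul_le_mul_of_nonneg_right (hf x hx).2 (hk x hx)
  exact abs_sub_le_of_nonneg_of_le hint_nonneg hint_le (mul_nonneg (hf c hc).1 hmass)
    (mul_le_mul_of_nonneg_right (hf c hc).2 hmass)

/-- The imaginary EIS kernel `h₂(ω, t) = ωt / (1 + ω²t²)` in the variable `s = log t`. -/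
noncomputable def imagKernel (ω s : ℝ) : ℝ := ω * exp s / (1 + ω ^ 2 * exp (2 * s))

theorem hasDerivAt_arctan_mul_exp (ω s : ℝ) :
    HasDerivAt (fun s => arctan (ω * exp s)) (imagKernel ω s) s := by
  refine ((hasDerivAt_arctan _).comp s ((hasDerivAt_exp s).const_mul ω)).congr_deriv ?_
  rw [imagKernel, two_mul, exp_add]
  ring

theorem tendsto_arctan_mul_exp_atBot (ω : ℝ) :
    Tendsto (fun s => arctan (ω * exp s)) atBot (𝓝 0) := by
  have := (continuous_arctan.tendsto _).comp (tendsto_exp_atBot.const_mul ω)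
  simpa [Function.comp_def] using this

section

variable {ω : ℝ}

theorem imagKernel_nonneg (hω : 0 ≤ ω) (s : ℝ) : 0 ≤ imagKernel ω s := by
  unfold imagKernel
  positivity

theorem continuous_imagKernel : Continuous (imagKernel ω) := by
  unfold imagKernel
  exact Continuous.div (by fun_prop) (by fun_prop) fun s => by positivity

theorem imagKernel_le (hω : 0 ≤ ω) (s : ℝ) : imagKernel ω s ≤ ω * exp s :=
  div_le_self (by positivity) (le_add_of_nonneg_right (by positivity))

theorem integrableOn_imagKernel_Iic (hω : 0 ≤ ω) (a : ℝ) :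
    IntegrableOn (imagKernel ω) (Iic a) := by
  refine ((integrableOn_exp_Iic a).const_mul ω).mono' ?_ (ae_of_all _ fun s => ?_)
  · exact continuous_imagKernel.aestronglyMeasurable
  · rw [norm_of_nonneg (imagKernel_nonneg hω s)]
    exact imagKernel_le hω s

theorem integral_imagKernel_Iic (hω : 0 ≤ ω) (a : ℝ) :
    ∫ s in Iic a, imagKernel ω s = arctan (ω * exp a) := by
  rw [integral_Iic_of_hasDerivAt_of_tendsto' (fun s _ => hasDerivAt_arctan_mul_exp ω s)
    (integrableOn_imagKernel_Iic hω a) (tendsto_arctan_mul_exp_atBot ω), sub_zero]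

theorem tendsto_arctan_mul_exp_atTop (hω : 0 < ω) :
    Tendsto (fun s => arctan (ω * exp s)) atTop (𝓝 (π / 2)) :=
  tendsto_nhds_of_tendsto_nhdsWithin tendsto_arctan_atTop |>.comp
    (tendsto_exp_atTop.const_mul_atTop hω)

theorem integrableOn_imagKernel_Ici (hω : 0 < ω) (a : ℝ) :
    IntegrableOn (imagKernel ω) (Ici a) :=
  (integrableOn_Ici_iff_integrableOn_Ioi).2 <|
    integrableOn_Ioi_deriv_of_nonneg' (fun s _ => hasDerivAt_arctan_mul_exp ω s)
      (fun s _ => imagKernel_nonneg hω.le s) (tendsto_arctan_mul_exp_atTop hω)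

theorem integral_imagKernel_Ici (hω : 0 < ω) (a : ℝ) :
    ∫ s in Ici a, imagKernel ω s = π / 2 - arctan (ω * exp a) := by
  rw [integral_Ici_eq_integral_Ioi]
  exact integral_Ioi_of_hasDerivAt_of_nonneg' (fun s _ => hasDerivAt_arctan_mul_exp ω s)
    (fun s _ => imagKernel_nonneg hω.le s) (tendsto_arctan_mul_exp_atTop hω)

end

theorem truncation_error_h2_general (ω s₁ sN ε : ℝ) (hω : 0 < ω)
    (f : ℝ → ℝ)
    (hbdL : ∀ s, s ≤ s₁ → 0 ≤ f s ∧ f s ≤ ε)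
    (hbdR : ∀ s, sN ≤ s → 0 ≤ f s ∧ f s ≤ ε) :
    |(∫ s in Set.Iic s₁, f s * (ω * Real.exp s / (1 + ω ^ 2 * Real.exp (2 * s)))) +
        (∫ s in Set.Ici sN, f s * (ω * Real.exp s / (1 + ω ^ 2 * Real.exp (2 * s)))) -
        f s₁ * Real.arctan (ω * Real.exp s₁) -
        f sN * (Real.pi / 2 - Real.arctan (ω * Real.exp sN))| ≤
      ε * (Real.pi / 2 + Real.arctan (ω * Real.exp s₁) - Real.arctan (ω * Real.exp sN)) ∧
    ε * (Real.pi / 2 + Real.arctan (ω * Real.exp s₁) - Real.arctan (ω * Real.exp sN)) ≤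
      ε * Real.pi := by
  simp only [← imagKernel.eq_1]
  have hL := abs_setIntegral_mul_sub_mul_setIntegral_le measurableSet_Iic self_mem_Iic hbdL
    (fun s _ => imagKernel_nonneg hω.le s) (integrableOn_imagKernel_Iic hω.le s₁)
  have hR := abs_setIntegral_mul_sub_mul_setIntegral_le measurableSet_Ici self_mem_Ici hbdR
    (fun s _ => imagKernel_nonneg hω.le s) (integrableOn_imagKernel_Ici hω sN)
  rw [integral_imagKernel_Iic hω.le] at hL
  rw [integral_imagKernel_Ici hω] at hR
  have hε : 0 ≤ ε := (hbdL s₁ le_rfl).1.trans (hbdL s₁ le_rfl).2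
  refine ⟨?_, mul_le_mul_of_nonneg_left ?_ hε⟩
  · rw [abs_le] at hL hR ⊢
    constructor <;> linarith
  · linarith [arctan_lt_pi_div_two (ω * exp s₁), arctan_nonneg.2 (by positivity : 0 ≤ ω * exp sN)]

/-- **Truncation error bound for the imaginary kernel `h₂`.**
If `ω > 0`, `s₁ ≤ s_N`, `ε > 0`, and `f` is measurable with `0 ≤ f(s) ≤ ε` for all
`s ≤ s₁` and all `s ≥ s_N`, with the corresponding integrability of `f·h₂` on the tails,
then the truncation error
`e₂(ω) = |∫_{-∞}^{s₁} f h₂ + ∫_{s_N}^{∞} f h₂ − f(s₁) arctan(ω e^{s₁})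
          − f(s_N)(π/2 − arctan(ω e^{s_N}))|`
satisfies `e₂(ω) ≤ ε (π/2 + arctan(ω e^{s₁}) − arctan(ω e^{s_N})) ≤ ε π`. -/
theorem truncation_error_h2 (ω s₁ sN ε : ℝ) (hω : 0 < ω) (hs : s₁ ≤ sN) (hε : 0 < ε)
    (f : ℝ → ℝ) (hf : Measurable f)
    (hbdL : ∀ s, s ≤ s₁ → 0 ≤ f s ∧ f s ≤ ε)
    (hbdR : ∀ s, sN ≤ s → 0 ≤ f s ∧ f s ≤ ε)
    (hintL : IntegrableOn
      (fun s => f s * (ω * Real.exp s / (1 + ω ^ 2 * Real.exp (2 * s)))) (Set.Iic s₁))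
    (hintR : IntegrableOn
      (fun s => f s * (ω * Real.exp s / (1 + ω ^ 2 * Real.exp (2 * s)))) (Set.Ici sN)) :
    |(∫ s in Set.Iic s₁, f s * (ω * Real.exp s / (1 + ω ^ 2 * Real.exp (2 * s)))) +
        (∫ s in Set.Ici sN, f s * (ω * Real.exp s / (1 + ω ^ 2 * Real.exp (2 * s)))) -
        f s₁ * Real.arctan (ω * Real.exp s₁) -
        f sN * (Real.pi / 2 - Real.arctan (ω * Real.exp sN))| ≤
      ε * (Real.pi / 2 + Real.arctan (ω * Real.exp s₁) - Real.arctan (ω * Real.exp sN)) ∧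
    ε * (Real.pi / 2 + Real.arctan (ω * Real.exp s₁) - Real.arctan (ω * Real.exp sN)) ≤
      ε * Real.pi :=
  truncation_error_h2_general ω s₁ sN ε hω f hbdL hbdR
end

section
/- For parameters 0 < β < 1, t₀ > 0 and any real s_N, the upper truncation error of the RQ distribution satisfies ∫_{s_N}^{∞} f_RQ(s) ds = 1/2 − arctan(tan(πβ/2)·tanh(β(s_N − ln t₀)/2)) / (πβ). -/
open MeasureTheory Real

/-!
With `u = β (s - log t₀)` and `θ = π β`, the density is `β sin θ / (2 π β (cosh u + cos θ))`, and the
half-angle substitution gives the primitive `arctan (tan (θ/2) tanh (u/2))` of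
`sin θ / (2 (cosh u + cos θ))`. This primitive tends to `θ/2` as `u → ∞`, and the density is positive,
so the improper integral over `(s_N, ∞)` is the difference of the limit and the value at `s_N`.
-/

open Filter Topology

namespace Real

theorem hasDerivAt_tanh (x : ℝ) : HasDerivAt tanh (1 / cosh x ^ 2) x := by
  have h := (hasDerivAt_sinh x).div (hasDerivAt_cosh x) (cosh_pos x).ne'
  rw [show cosh x * cosh x - sinh x * sinh x = 1 by nlinarith [cosh_sq_sub_sinh_sq x]] at h
  exact (funext tanh_eq_sinh_div_cosh).symm ▸ h

theorem tanh_eq_one_sub (x : ℝ) : tanh x = 1 - 2 / (exp (2 * x) + 1) := by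
  have h : exp (2 * x) = exp x * exp x := by rw [← exp_add, two_mul]
  rw [tanh_eq, exp_neg, h]
  field_simp
  ring

theorem tendsto_tanh_atTop : Tendsto tanh atTop (𝓝 1) := by
  have h : Tendsto (fun x : ℝ => exp (2 * x) + 1) atTop atTop :=
    tendsto_atTop_add_const_right _ 1 (tendsto_exp_atTop.comp (tendsto_id.const_mul_atTop two_pos))
  simpa [← tanh_eq_one_sub] using (tendsto_const_nhds (x := (2 : ℝ))).div_atTop h |>.const_sub 1

end Real

theorem hasDerivAt_arctan_tan_half_mul_tanh_half {θ : ℝ} (hθ : cos (θ / 2) ≠ 0) (u : ℝ) :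
    HasDerivAt (fun u => arctan (tan (θ / 2) * tanh (u / 2)))
      (sin θ / (2 * (cosh u + cos θ))) u := by
  have h : HasDerivAt (fun u => arctan (tan (θ / 2) * tanh (u / 2)))
      (1 / (1 + (tan (θ / 2) * tanh (u / 2)) ^ 2) *
        (tan (θ / 2) * (1 / cosh (u / 2) ^ 2 * (1 / 2)))) u :=
    (hasDerivAt_arctan _).comp u
      (((hasDerivAt_tanh _).comp u ((hasDerivAt_id u).div_const 2)).const_mul _)
  refine h.congr_deriv ?_
  have hC : cosh (u / 2) ≠ 0 := (cosh_pos _).ne'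
  have hpy := sin_sq_add_cos_sq (θ / 2)
  have hhy := cosh_sq (u / 2)
  rw [tan_eq_sin_div_cos, tanh_eq_sinh_div_cosh]
  conv_rhs => rw [show θ = 2 * (θ / 2) by ring, show u = 2 * (u / 2) by ring, sin_two_mul,
    cos_two_mul, cosh_two_mul]
  have hY : cosh (u / 2) ^ 2 + sinh (u / 2) ^ 2 + (2 * cos (θ / 2) ^ 2 - 1) =
      2 * (sinh (u / 2) ^ 2 + cos (θ / 2) ^ 2) := by linarith
  field_simp
  rw [hY, eq_div_iff (by positivity)]
  linear_combination (-2 * sin (θ / 2) * cos (θ / 2) ^ 2) * hhy +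
    (-2 * sin (θ / 2) * sinh (u / 2) ^ 2) * hpy

theorem tendsto_arctan_tan_half_mul_tanh_half {θ : ℝ} (hθ₀ : -π < θ) (hθ₁ : θ < π) :
    Tendsto (fun u => arctan (tan (θ / 2) * tanh (u / 2))) atTop (𝓝 (θ / 2)) := by
  have h := ((continuous_arctan.tendsto _).comp
    ((tendsto_tanh_atTop.comp (tendsto_id.atTop_div_const two_pos)).const_mul (tan (θ / 2))))
  rwa [mul_one, arctan_tan (by linarith) (by linarith)] at h

theorem fRQ_pos {β : ℝ} (hβ₀ : 0 < β) (hβ₁ : β < 1) (t₀ s : ℝ) : 0 < fRQ β t₀ s := by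
  have hsin : 0 < sin (β * π) := sin_pos_of_pos_of_lt_pi (by positivity) (by nlinarith [pi_pos])
  have hcos : -1 < cos (β * π) := by
    simpa using cos_lt_cos_of_nonneg_of_le_pi (by positivity) le_rfl (by nlinarith [pi_pos])
  have hcosh := one_le_cosh (β * (s - log t₀))
  have hden : 0 < cosh (β * (s - log t₀)) + cos (β * π) := by linarith
  unfold fRQ
  positivity

theorem hasDerivAt_fRQ_primitive {β : ℝ} (hβ : β ≠ 0) (hcos : cos (π * β / 2) ≠ 0)
    (t₀ s : ℝ) :
    HasDerivAt (fun s => arctan (tan (π * β / 2) * tanh (β * (s - log t₀) / 2)) / (π * β))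
      (fRQ β t₀ s) s := by
  have h := ((hasDerivAt_arctan_tan_half_mul_tanh_half hcos (β * (s - log t₀))).comp s
    (((hasDerivAt_id s).sub_const (log t₀)).const_mul β)).div_const (π * β)
  refine h.congr_deriv ?_
  rw [fRQ, mul_comm β π]
  field_simp [pi_ne_zero]

theorem fRQ_upper_truncation_general (β t₀ sN : ℝ) (hβ₀ : 0 < β) (hβ₁ : β < 1) :
    ∫ s in Set.Ioi sN, fRQ β t₀ s =
      1 / 2 - Real.arctan (Real.tan (π * β / 2) *
        Real.tanh (β * (sN - Real.log t₀) / 2)) / (π * β) := by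
  have hπβ : π * β < π := by nlinarith [pi_pos]
  have hcos : cos (π * β / 2) ≠ 0 :=
    (cos_pos_of_mem_Ioo ⟨by nlinarith [pi_pos], by linarith⟩).ne'
  have hlim : Tendsto (fun s => arctan (tan (π * β / 2) * tanh (β * (s - log t₀) / 2)) / (π * β))
      atTop (𝓝 (1 / 2)) := by
    have hu : Tendsto (fun s => β * (s - log t₀)) atTop atTop :=
      (tendsto_atTop_add_const_right _ (-log t₀) tendsto_id).const_mul_atTop hβ₀
    have h := ((tendsto_arctan_tan_half_mul_tanh_half (by nlinarith [pi_pos]) hπβ).comp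
      hu).div_const (π * β)
    rwa [div_div, mul_comm 2, ← div_div, div_self (by positivity)] at h
  exact integral_Ioi_of_hasDerivAt_of_nonneg'
    (fun s _ => hasDerivAt_fRQ_primitive hβ₀.ne' hcos t₀ s)
    (fun s _ => (fRQ_pos hβ₀ hβ₁ t₀ s).le) hlim

/-- **Upper truncation error of the RQ distribution.**
For `0 < β < 1`, `t₀ > 0` and any `s_N`,
`∫_{s_N}^{∞} f_RQ(s) ds = 1/2 − arctan(tan(πβ/2) tanh(β(s_N − ln t₀)/2))/(πβ)`. -/
theorem fRQ_upper_truncation (β t₀ sN : ℝ) (hβ₀ : 0 < β) (hβ₁ : β < 1) (ht₀ : 0 < t₀) :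
    ∫ s in Set.Ioi sN, fRQ β t₀ s =
      1 / 2 - Real.arctan (Real.tan (π * β / 2) *
        Real.tanh (β * (sN - Real.log t₀) / 2)) / (π * β) :=
  fRQ_upper_truncation_general β t₀ sN hβ₀ hβ₁
end

section
/- For parameters 0 < β < 1 and t₀ > 0, the RQ distribution in s-space is normalized: ∫_{-∞}^{∞} f_RQ(s) ds = 1. -/
/-!
The substitution `u = β (s - log t₀)` reduces the claim to `∫ sin a / (cosh u + cos a) du = 2a`
for `a = βπ ∈ (0, π)`. Since `2 eᵘ (cosh u + cos a) = (eᵘ + cos a)² + sin² a`, the function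
`2 arctan ((eᵘ + cos a) / sin a)` is an antiderivative of the integrand; it increases from
`π - 2a` at `-∞` to `π` at `+∞`.
-/

open MeasureTheory Real

open Filter Topology Set

theorem integrable_of_hasDerivAt_of_nonneg {f f' : ℝ → ℝ} {m n : ℝ}
    (hderiv : ∀ x, HasDerivAt f (f' x) x) (hf' : ∀ x, 0 ≤ f' x)
    (hbot : Tendsto f atBot (𝓝 m)) (htop : Tendsto f atTop (𝓝 n)) : Integrable f' := by
  have hinterval : ∀ a b, IntervalIntegrable f' volume a b := fun a b =>
    intervalIntegral.intervalIntegrable_deriv_of_nonneg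
      (fun x _ => (hderiv x).continuousAt.continuousWithinAt) (fun x _ => hderiv x)
      (fun x _ => hf' x)
  have hIic : IntegrableOn f' (Iic 0) := by
    refine integrableOn_Iic_of_intervalIntegral_norm_tendsto (f 0 - m) 0
      (fun i => (hinterval i 0).1) tendsto_id ?_
    have hftc : ∀ i, ∫ x in i..0, ‖f' x‖ = f 0 - f i := fun i => by
      simp only [Real.norm_of_nonneg (hf' _)]
      exact intervalIntegral.integral_eq_sub_of_hasDerivAt (fun x _ => hderiv x) (hinterval i 0)
    simpa only [hftc] using hbot.const_sub (f 0)
  have hIoi : IntegrableOn f' (Ioi 0) :=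
    integrableOn_Ioi_deriv_of_nonneg' (fun x _ => hderiv x) (fun x _ => hf' x) htop
  rw [← integrableOn_univ, ← Iic_union_Ioi (a := 0)]
  exact hIic.union hIoi

theorem cosh_add_cos_mul_two_exp (a u : ℝ) :
    (cosh u + cos a) * (2 * exp u) = (exp u + cos a) ^ 2 + sin a ^ 2 := by
  have hexp : exp u * exp (-u) = 1 := by rw [← exp_add]; simp
  rw [cosh_eq]
  linear_combination hexp - sin_sq_add_cos_sq a

theorem cosh_add_cos_pos {a : ℝ} (ha : sin a ≠ 0) (u : ℝ) : 0 < cosh u + cos a := by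
  have h := cosh_add_cos_mul_two_exp a u
  have : 0 < (exp u + cos a) ^ 2 + sin a ^ 2 := by positivity
  nlinarith [exp_pos u]

theorem hasDerivAt_two_mul_arctan_exp_add_cos_div_sin {a : ℝ} (ha : sin a ≠ 0) (u : ℝ) :
    HasDerivAt (fun u => 2 * arctan ((exp u + cos a) / sin a))
      (sin a / (cosh u + cos a)) u := by
  have h := (((hasDerivAt_exp u).add_const (cos a)).div_const (sin a)).arctan.const_mul 2
  refine h.congr_deriv ?_
  have hpos := cosh_add_cos_pos ha u
  have hid := cosh_add_cos_mul_two_exp a u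
  field_simp
  linear_combination hid

theorem tendsto_arctan_exp_add_cos_div_sin_atTop {a : ℝ} (ha : 0 < sin a) :
    Tendsto (fun u => arctan ((exp u + cos a) / sin a)) atTop (𝓝 (π / 2)) :=
  tendsto_nhds_of_tendsto_nhdsWithin <| tendsto_arctan_atTop.comp <|
    (tendsto_exp_atTop.atTop_add tendsto_const_nhds).atTop_div_const ha

theorem tendsto_arctan_exp_add_cos_div_sin_atBot {a : ℝ} (h0 : 0 < a) (hπ : a < π) :
    Tendsto (fun u => arctan ((exp u + cos a) / sin a)) atBot (𝓝 (π / 2 - a)) := by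
  have harg : arctan ((0 + cos a) / sin a) = π / 2 - a := by
    rw [zero_add, ← cos_pi_div_two_sub, ← sin_pi_div_two_sub, ← tan_eq_sin_div_cos,
      arctan_tan] <;> linarith
  rw [← harg]
  exact (continuous_arctan.tendsto _).comp
    ((tendsto_exp_atBot.add_const (cos a)).div_const (sin a))

theorem integral_sin_div_cosh_add_cos {a : ℝ} (h0 : 0 < a) (hπ : a < π) :
    ∫ u, sin a / (cosh u + cos a) = 2 * a := by
  have hsin : 0 < sin a := sin_pos_of_pos_of_lt_pi h0 hπ
  have hderiv := hasDerivAt_two_mul_arctan_exp_add_cos_div_sin hsin.ne'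
  have hbot := (tendsto_arctan_exp_add_cos_div_sin_atBot h0 hπ).const_mul 2
  have htop := (tendsto_arctan_exp_add_cos_div_sin_atTop hsin).const_mul 2
  have hint := integrable_of_hasDerivAt_of_nonneg hderiv
    (fun u => (div_pos hsin (cosh_add_cos_pos hsin.ne' u)).le) hbot htop
  rw [integral_of_hasDerivAt_of_tendsto hderiv hint hbot htop]
  ring

theorem fRQ_normalized_general (β t₀ : ℝ) (hβ₀ : 0 < β) (hβ₁ : β < 1) :
    ∫ s : ℝ, fRQ β t₀ s = 1 := by
  have hβπ : β * π < π := by nlinarith [pi_pos]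
  set g : ℝ → ℝ := fun u => sin (β * π) / (cosh u + cos (β * π))
  calc ∫ s, fRQ β t₀ s = (2 * π)⁻¹ * ∫ s, (fun v => g (β * v)) (s - log t₀) := by
        rw [← integral_const_mul]
        congr 1 with s
        simp only [fRQ, g]
        field_simp
    _ = (2 * π)⁻¹ * (β⁻¹ * ∫ u, g u) := by
        rw [integral_sub_right_eq_self (fun v => g (β * v)), Measure.integral_comp_mul_left,
          smul_eq_mul, abs_of_pos (inv_pos.2 hβ₀)]
    _ = 1 := by
        rw [integral_sin_div_cosh_add_cos (by positivity) hβπ]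
        field_simp

/-- **Normalization of the RQ distribution in `s`-space.**
For `0 < β < 1` and `t₀ > 0`, `∫_{-∞}^{∞} f_RQ(s) ds = 1`. -/
theorem fRQ_normalized (β t₀ : ℝ) (hβ₀ : 0 < β) (hβ₁ : β < 1) (ht₀ : 0 < t₀) :
    ∫ s : ℝ, fRQ β t₀ s = 1 :=
  fRQ_normalized_general β t₀ hβ₀ hβ₁
end
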